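/- arXiv:1409.2166 — 7 statements merged into one kernel-verified Lean document; each statement's English description precedes it below -/
import Mathlib

section
/- Let 0 < λ < 1. Then ζ_λ has exactly one nonzero real fixed point, and this fixed point lies in the open interval (−1, 0). -/
/-- The real function `ζ_λ(x) = λ·x·e^{−x}/(x+1)`. -/
noncomputable def zeta (lam x : ℝ) : ℝ := lam * x * Real.exp (-x) / (x + 1)

theorem unique_nonzero_fixed_point_of_lt_one (lam : ℝ) (hlam0 : 0 < lam) (hlam1 : lam < 1) :
    ∃ r : ℝ, r ∈ Set.Ioo (-1 : ℝ) 0 ∧ zeta lam r = r ∧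
      ∀ x : ℝ, x ≠ 0 → x ≠ -1 → zeta lam x = x → x = r := by
  set g : ℝ → ℝ := fun x => lam * Real.exp (-x) - (x + 1) with hg
  have hanti : StrictAnti g := by
    intro a b hab
    have h1 : Real.exp (-b) < Real.exp (-a) := Real.exp_lt_exp.mpr (by linarith)
    have h2 : lam * Real.exp (-b) < lam * Real.exp (-a) :=
      mul_lt_mul_of_pos_left h1 hlam0
    simp only [hg]
    linarith
  have hcont : Continuous g := by
    continuity
  have hgm1 : 0 < g (-1) := by
    simp only [hg]
    have := Real.exp_pos (-(-1 : ℝ))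
    nlinarith
  have hg0 : g 0 < 0 := by
    simp only [hg, neg_zero, Real.exp_zero]
    linarith
  -- intermediate value: get r in Ioo (-1) 0 with g r = 0
  have hsub : Set.Ioo (g 0) (g (-1)) ⊆ g '' Set.Ioo (-1 : ℝ) 0 :=
    intermediate_value_Ioo' (by norm_num) hcont.continuousOn
  obtain ⟨r, hrmem, hr⟩ := hsub ⟨hg0, hgm1⟩
  have key : ∀ x : ℝ, x ≠ 0 → x ≠ -1 → (zeta lam x = x ↔ g x = 0) := by
    intro x hx0 hxm1
    have hx1 : x + 1 ≠ 0 := by intro h; apply hxm1; linarith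
    rw [zeta, div_eq_iff hx1, hg]
    constructor
    · intro h
      have : x * (lam * Real.exp (-x)) = x * (x + 1) := by ring_nf; ring_nf at h; linarith
      have := mul_left_cancel₀ hx0 this
      simp; linarith
    · intro h
      have : lam * Real.exp (-x) = x + 1 := by simp at h; linarith
      linear_combination x * this
  have hr0 : r ≠ 0 := ne_of_lt hrmem.2
  have hrm1 : r ≠ -1 := ne_of_gt hrmem.1
  refine ⟨r, hrmem, (key r hr0 hrm1).mpr hr, ?_⟩
  intro x hx0 hxm1 hfix
  exact hanti.injective (((key x hx0 hxm1).mp hfix).trans hr.symm)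
end

section
/- Let 1 < λ < λ*, where λ* = (√2+1)·e^{√2}. Then ζ_λ has exactly one nonzero real fixed point, and this fixed point lies in the open interval (0, √2). -/
open Set

lemma zeta_eq_self_iff {lam x : ℝ} (hx0 : x ≠ 0) (hx1 : x ≠ -1) :
    zeta lam x = x ↔ (x + 1) * Real.exp x = lam := by
  have hx1' : x + 1 ≠ 0 := fun h => hx1 (by linarith)
  rw [zeta, div_eq_iff hx1', mul_comm lam x, mul_assoc, mul_right_inj' hx0, Real.exp_neg,
    ← div_eq_mul_inv, div_eq_iff (Real.exp_pos x).ne', eq_comm]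

lemma strictMonoOn_add_one_mul_exp :
    StrictMonoOn (fun x => (x + 1) * Real.exp x) (Ici (-1)) := by
  intro x hx y _ hxy
  have hx1 : 0 ≤ x + 1 := by rw [mem_Ici] at hx; linarith
  calc (x + 1) * Real.exp x ≤ (x + 1) * Real.exp y := by gcongr
    _ < (y + 1) * Real.exp y := by gcongr

lemma neg_one_lt_of_add_one_mul_exp_pos {x : ℝ} (h : 0 < (x + 1) * Real.exp x) : -1 < x := by
  have := pos_of_mul_pos_left h (Real.exp_pos x).le
  linarith

lemma eq_of_zeta_eq_self {lam x y : ℝ} (hlam : 0 < lam) (hx0 : x ≠ 0) (hx1 : x ≠ -1)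
    (hy0 : y ≠ 0) (hy1 : y ≠ -1) (hx : zeta lam x = x) (hy : zeta lam y = y) : x = y := by
  rw [zeta_eq_self_iff hx0 hx1] at hx
  rw [zeta_eq_self_iff hy0 hy1] at hy
  refine strictMonoOn_add_one_mul_exp.injOn ?_ ?_ (hx.trans hy.symm)
  · exact (neg_one_lt_of_add_one_mul_exp_pos (hx ▸ hlam)).le
  · exact (neg_one_lt_of_add_one_mul_exp_pos (hy ▸ hlam)).le

lemma exists_zeta_eq_self_mem_Ioo {lam b : ℝ} (hb : 0 ≤ b) (hlam0 : 1 < lam)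
    (hlamb : lam < (b + 1) * Real.exp b) : ∃ a ∈ Ioo 0 b, zeta lam a = a := by
  have hcont : ContinuousOn (fun x => (x + 1) * Real.exp x) (Icc 0 b) := by fun_prop
  obtain ⟨a, ha, hga⟩ := intermediate_value_Ioo hb hcont (by simpa using And.intro hlam0 hlamb)
  exact ⟨a, ha, (zeta_eq_self_iff ha.1.ne' (by linarith [ha.1])).2 hga⟩

theorem unique_nonzero_fixed_point_of_one_lt_lt_lamStar (lam : ℝ) (hlam0 : 1 < lam)
    (hlam1 : lam < (Real.sqrt 2 + 1) * Real.exp (Real.sqrt 2)) :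
    ∃ a : ℝ, a ∈ Set.Ioo (0 : ℝ) (Real.sqrt 2) ∧ zeta lam a = a ∧
      ∀ x : ℝ, x ≠ 0 → x ≠ -1 → zeta lam x = x → x = a := by
  obtain ⟨a, ha, hfix⟩ := exists_zeta_eq_self_mem_Ioo (Real.sqrt_nonneg 2) hlam0 hlam1
  refine ⟨a, ha, hfix, fun x hx0 hx1 hx => ?_⟩
  exact eq_of_zeta_eq_self (by linarith) hx0 hx1 ha.1.ne' (by linarith [ha.1]) hx hfix
end

section
/- Let λ > 0 and let x_f be a nonzero real fixed point of ζ_λ lying in the open interval (0, √2). Then |ζ_λ'(x_f)| < 1, i.e. x_f is an attracting fixed point. -/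
open Real

theorem hasDerivAt_zeta (lam : ℝ) {x : ℝ} (hx : x + 1 ≠ 0) :
    HasDerivAt (zeta lam) (lam * exp (-x) * (1 - x - x ^ 2) / (x + 1) ^ 2) x := by
  have hnum : HasDerivAt (fun y => lam * y * exp (-y)) (lam * exp (-x) * (1 - x)) x :=
    (((hasDerivAt_id' x).const_mul lam).mul (hasDerivAt_neg x).exp).congr_deriv (by ring)
  exact (hnum.div ((hasDerivAt_id' x).add_const 1) hx).congr_deriv (by ring)

theorem exp_neg_mul_eq_of_zeta_eq_self {lam x : ℝ} (hx : x ≠ 0) (hx1 : x + 1 ≠ 0)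
    (hfix : zeta lam x = x) : lam * exp (-x) = x + 1 := by
  unfold zeta at hfix
  rw [div_eq_iff hx1] at hfix
  exact mul_left_cancel₀ hx (by linear_combination hfix)

theorem deriv_zeta_of_zeta_eq_self {lam x : ℝ} (hx : x ≠ 0) (hx1 : x + 1 ≠ 0)
    (hfix : zeta lam x = x) : deriv (zeta lam) x = (1 - x - x ^ 2) / (x + 1) := by
  rw [(hasDerivAt_zeta lam hx1).deriv, exp_neg_mul_eq_of_zeta_eq_self hx hx1 hfix]
  field_simp

theorem abs_one_sub_sub_sq_div_lt_one {x : ℝ} (hx : 0 < x) (hx2 : x ^ 2 < 2) :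
    |(1 - x - x ^ 2) / (x + 1)| < 1 := by
  rw [abs_div, abs_of_pos (by linarith : 0 < x + 1), div_lt_one (by linarith), abs_lt]
  constructor <;> nlinarith

theorem attracting_fixed_point_in_Ioo_zero_sqrt_two_general (lam : ℝ) (xf : ℝ)
    (hxf : xf ∈ Set.Ioo (0 : ℝ) (Real.sqrt 2)) (hfix : zeta lam xf = xf) :
    |deriv (zeta lam) xf| < 1 := by
  obtain ⟨hx0, hx2⟩ := hxf
  rw [deriv_zeta_of_zeta_eq_self hx0.ne' (by linarith) hfix]
  exact abs_one_sub_sub_sq_div_lt_one hx0 ((lt_sqrt hx0.le).mp hx2)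

theorem attracting_fixed_point_in_Ioo_zero_sqrt_two (lam : ℝ) (hlam : 0 < lam) (xf : ℝ)
    (hxf : xf ∈ Set.Ioo (0 : ℝ) (Real.sqrt 2)) (hfix : zeta lam xf = xf) :
    |deriv (zeta lam) xf| < 1 :=
  attracting_fixed_point_in_Ioo_zero_sqrt_two_general lam xf hxf hfix
end

section
/- Let 0 < λ < 1 and let r be the (unique) fixed point of ζ_λ in (−1, 0). Then ζ_λ(x) > x for all x ∈ (r, 0), and ζ_λ(x) < x for all x ∈ (−1, r) ∪ (0, ∞). -/
theorem zeta_vs_id_of_lt_one (lam : ℝ) (hlam0 : 0 < lam) (hlam1 : lam < 1) (r : ℝ)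
    (hr : r ∈ Set.Ioo (-1 : ℝ) 0) (hfix : zeta lam r = r) :
    (∀ x ∈ Set.Ioo r 0, x < zeta lam x) ∧
      (∀ x ∈ Set.Ioo (-1 : ℝ) r ∪ Set.Ioi (0 : ℝ), zeta lam x < x) := by
  obtain ⟨hr1, hr0⟩ := hr
  have hr1' : (0:ℝ) < r + 1 := by linarith
  have hrne : r ≠ 0 := ne_of_lt hr0
  have key : lam * Real.exp (-r) = r + 1 := by
    unfold zeta at hfix
    rw [div_eq_iff (ne_of_gt hr1')] at hfix
    have : r * (lam * Real.exp (-r)) = r * (r + 1) := by ring_nf; ring_nf at hfix; linarith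
    exact mul_left_cancel₀ hrne this
  constructor
  · rintro x ⟨hx1, hx2⟩
    have hx1' : (0:ℝ) < x + 1 := by linarith
    have hexp : Real.exp (-x) < Real.exp (-r) := Real.exp_lt_exp.mpr (by linarith)
    have h1 : lam * Real.exp (-x) < x + 1 := by
      have := mul_lt_mul_of_pos_left hexp hlam0
      linarith
    rw [zeta, lt_div_iff₀ hx1']
    nlinarith
  · rintro x (⟨hx1, hx2⟩ | hx)
    · have hx1' : (0:ℝ) < x + 1 := by linarith
      have hexp : Real.exp (-r) < Real.exp (-x) := Real.exp_lt_exp.mpr (by linarith)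
      have h1 : x + 1 < lam * Real.exp (-x) := by
        have := mul_lt_mul_of_pos_left hexp hlam0
        linarith
      rw [zeta, div_lt_iff₀ hx1']
      nlinarith
    · simp only [Set.mem_Ioi] at hx
      have hx1' : (0:ℝ) < x + 1 := by linarith
      have hexp : Real.exp (-x) < Real.exp (-r) := Real.exp_lt_exp.mpr (by linarith)
      have h1 : lam * Real.exp (-x) < x + 1 := by
        have := mul_lt_mul_of_pos_left hexp hlam0
        linarith
      rw [zeta, div_lt_iff₀ hx1']
      nlinarith
end

section
/- Let 0 < λ < 1 and let r be the (unique) fixed point of ζ_λ in (−1, 0). For every x ∈ (r, 0), all iterates ζ_λ^n(x) remain in (r, 0), the sequence (ζ_λ^n(x))_{n≥0} is strictly increasing, and ζ_λ^n(x) → 0 as n → ∞. -/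
/-!
At the fixed point `r` we have `λ e^{-r} = r + 1`, so for `y ∈ (r, 0)` the ratio
`ζ_λ(y) / y = λ e^{-y} / (y + 1) = (r + 1) e^{r - y} / (y + 1)` lies in `(0, 1)`, i.e.
`y < ζ_λ(y) < 0`. The orbit of `x` is therefore increasing in `(r, 0)`; its limit is a fixed
point of the continuous map `ζ_λ` in `(r, 0]`, and it cannot lie in `(r, 0)`, where `ζ_λ` moves
points.
-/

open Filter

open Set

section IterateIncreasing

variable {α : Type*} {f : α → α} {a b x : α}

theorem strictMono_iterate_apply_of_lt_apply [Preorder α] (hmaps : MapsTo f (Ioo a b) (Ioo a b))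
    (hlt : ∀ y ∈ Ioo a b, y < f y) (hx : x ∈ Ioo a b) : StrictMono (fun n : ℕ => f^[n] x) :=
  strictMono_nat_of_lt_succ fun n => by
    rw [Function.iterate_succ_apply']
    exact hlt _ (hmaps.iterate n hx)

theorem tendsto_iterate_apply_of_lt_apply [ConditionallyCompleteLinearOrder α]
    [TopologicalSpace α] [OrderTopology α] (hmaps : MapsTo f (Ioo a b) (Ioo a b))
    (hlt : ∀ y ∈ Ioo a b, y < f y) (hcont : ContinuousOn f (Ioo a b)) (hx : x ∈ Ioo a b) :
    Tendsto (fun n : ℕ => f^[n] x) atTop (nhds b) := by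
  have hmem : ∀ n, f^[n] x ∈ Ioo a b := fun n => hmaps.iterate n hx
  have hbdd : BddAbove (range fun n => f^[n] x) := ⟨b, by
    rintro _ ⟨n, rfl⟩
    exact (hmem n).2.le⟩
  have hlim :=
    tendsto_atTop_ciSup (strictMono_iterate_apply_of_lt_apply hmaps hlt hx).monotone hbdd
  set L := ⨆ n, f^[n] x
  have haL : a < L := (hmem 0).1.trans_le (le_ciSup hbdd 0)
  have hLb : L ≤ b := ciSup_le fun n => (hmem n).2.le
  obtain hLb | rfl := hLb.lt_or_eq
  · have hL : L ∈ Ioo a b := ⟨haL, hLb⟩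
    have hfix : f L = L :=
      isFixedPt_of_tendsto_iterate hlim (hcont.continuousAt (isOpen_Ioo.mem_nhds hL))
    exact absurd hfix (hlt L hL).ne'
  · exact hlim

end IterateIncreasing

section Zeta

variable {lam r y : ℝ}

theorem zeta_eq_mul_div (lam y : ℝ) : zeta lam y = y * (lam * Real.exp (-y) / (y + 1)) := by
  unfold zeta
  ring

theorem mul_exp_neg_eq_of_zeta_eq_self (hr : r ∈ Ioo (-1 : ℝ) 0) (hfix : zeta lam r = r) :
    lam * Real.exp (-r) = r + 1 := by
  have hden : r + 1 ≠ 0 := by linarith [hr.1]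
  rw [zeta_eq_mul_div] at hfix
  have := mul_left_cancel₀ hr.2.ne (hfix.trans (mul_one r).symm)
  rwa [div_eq_one_iff_eq hden] at this

theorem mul_exp_neg_mem_Ioo (hr : r ∈ Ioo (-1 : ℝ) 0) (hfix : zeta lam r = r)
    (hy : y ∈ Ioo r 0) : lam * Real.exp (-y) ∈ Ioo 0 (y + 1) := by
  have hr1 : 0 < r + 1 := by linarith [hr.1]
  have hshift : lam * Real.exp (-y) = (r + 1) * Real.exp (r - y) := by
    rw [← mul_exp_neg_eq_of_zeta_eq_self hr hfix, mul_assoc, ← Real.exp_add]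
    ring_nf
  have hexp : Real.exp (r - y) < 1 := Real.exp_lt_one_iff.2 (by linarith [hy.1])
  rw [hshift]
  constructor
  · positivity
  · nlinarith [hy.1]

theorem zeta_mem_Ioo (hr : r ∈ Ioo (-1 : ℝ) 0) (hfix : zeta lam r = r) (hy : y ∈ Ioo r 0) :
    zeta lam y ∈ Ioo y 0 := by
  have hy1 : 0 < y + 1 := by linarith [hr.1, hy.1]
  obtain ⟨hpos, hlt⟩ := mul_exp_neg_mem_Ioo hr hfix hy
  have hratio : lam * Real.exp (-y) / (y + 1) ∈ Ioo 0 1 :=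
    ⟨div_pos hpos hy1, (div_lt_one hy1).2 hlt⟩
  rw [zeta_eq_mul_div]
  exact ⟨lt_mul_of_lt_one_right hy.2 hratio.2, mul_neg_of_neg_of_pos hy.2 hratio.1⟩

theorem mapsTo_zeta_Ioo (hr : r ∈ Ioo (-1 : ℝ) 0) (hfix : zeta lam r = r) :
    MapsTo (zeta lam) (Ioo r 0) (Ioo r 0) := fun _ hy =>
  ⟨hy.1.trans (zeta_mem_Ioo hr hfix hy).1, (zeta_mem_Ioo hr hfix hy).2⟩

theorem continuousOn_zeta (lam : ℝ) : ContinuousOn (zeta lam) (Ioi (-1)) := by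
  unfold zeta
  refine ContinuousOn.div (by fun_prop) (by fun_prop) fun x hx => ?_
  linarith [mem_Ioi.1 hx]

end Zeta

theorem iterates_increase_to_zero_on_Ioo_r_zero_general (lam : ℝ)
    (r : ℝ) (hr : r ∈ Set.Ioo (-1 : ℝ) 0) (hfix : zeta lam r = r)
    (x : ℝ) (hx : x ∈ Set.Ioo r 0) :
    (∀ n : ℕ, (zeta lam)^[n] x ∈ Set.Ioo r 0) ∧
      StrictMono (fun n : ℕ => (zeta lam)^[n] x) ∧
      Tendsto (fun n : ℕ => (zeta lam)^[n] x) atTop (nhds 0) := by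
  have hmaps := mapsTo_zeta_Ioo hr hfix
  have hlt : ∀ y ∈ Ioo r 0, y < zeta lam y := fun y hy => (zeta_mem_Ioo hr hfix hy).1
  have hcont : ContinuousOn (zeta lam) (Ioo r 0) :=
    (continuousOn_zeta lam).mono fun y hy => hr.1.trans hy.1
  exact ⟨fun n => hmaps.iterate n hx, strictMono_iterate_apply_of_lt_apply hmaps hlt hx,
    tendsto_iterate_apply_of_lt_apply hmaps hlt hcont hx⟩

theorem iterates_increase_to_zero_on_Ioo_r_zero (lam : ℝ) (hlam0 : 0 < lam) (hlam1 : lam < 1)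
    (r : ℝ) (hr : r ∈ Set.Ioo (-1 : ℝ) 0) (hfix : zeta lam r = r)
    (x : ℝ) (hx : x ∈ Set.Ioo r 0) :
    (∀ n : ℕ, (zeta lam)^[n] x ∈ Set.Ioo r 0) ∧
      StrictMono (fun n : ℕ => (zeta lam)^[n] x) ∧
      Tendsto (fun n : ℕ => (zeta lam)^[n] x) atTop (nhds 0) :=
  iterates_increase_to_zero_on_Ioo_r_zero_general lam r hr hfix x hx
end

section
/- Let λ > 0. For every x ∈ (−∞, −1) one has ζ_λ(x) > 0; consequently, if in addition 0 < λ ≤ 1, then for every x ∈ (−∞, −1) the iterates satisfy ζ_λ^n(x) → 0 as n → ∞. -/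
/-! For `x < -1` numerator and denominator of `ζ_λ(x)` are both negative. On `(0, ∞)` with
`λ ≤ 1` one has `0 < ζ_λ(y) ≤ y / (y + 1)`, i.e. `1/ζ_λ(y) ≥ 1/y + 1`, so after the first step
the reciprocals of the iterates grow at least linearly and the iterates tend to `0`. -/

open Filter

section Iterate

variable {f : ℝ → ℝ} (hf : ∀ y, 0 < y → 0 < f y ∧ y⁻¹ + 1 ≤ (f y)⁻¹)
include hf

lemma iterate_pos_and_inv_add_le_inv_iterate {y : ℝ} (hy : 0 < y) (n : ℕ) :
    0 < f^[n] y ∧ y⁻¹ + n ≤ (f^[n] y)⁻¹ := by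
  induction n with
  | zero => simp [hy]
  | succ n ih =>
    obtain ⟨hpos, hle⟩ := ih
    obtain ⟨hpos', hle'⟩ := hf _ hpos
    rw [Function.iterate_succ_apply']
    refine ⟨hpos', ?_⟩
    push_cast
    linarith

lemma tendsto_iterate_zero_of_inv_add_one_le {y : ℝ} (hy : 0 < y) :
    Tendsto (fun n : ℕ => f^[n] y) atTop (nhds 0) := by
  have hinv : Tendsto (fun n : ℕ => (f^[n] y)⁻¹) atTop atTop :=
    tendsto_atTop_mono (fun n => (iterate_pos_and_inv_add_le_inv_iterate hf hy n).2)
      (tendsto_atTop_add_const_left _ _ tendsto_natCast_atTop_atTop)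
  simpa only [Pi.inv_def, inv_inv] using hinv.inv_tendsto_atTop

end Iterate

lemma zeta_pos_of_lt_neg_one {lam x : ℝ} (hlam : 0 < lam) (hx : x < -1) : 0 < zeta lam x :=
  div_pos_of_neg_of_neg
    (mul_neg_of_neg_of_pos (mul_neg_of_pos_of_neg hlam (by linarith)) (Real.exp_pos _))
    (by linarith)

lemma zeta_pos_of_pos {lam y : ℝ} (hlam : 0 < lam) (hy : 0 < y) : 0 < zeta lam y := by
  unfold zeta
  positivity

lemma zeta_le_div_add_one {lam y : ℝ} (hlam : lam ≤ 1) (hy : 0 < y) :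
    zeta lam y ≤ y / (y + 1) := by
  have hexp : Real.exp (-y) ≤ 1 := Real.exp_le_one_iff.mpr (by linarith)
  have hfactor : lam * Real.exp (-y) ≤ 1 := by
    nlinarith [mul_nonneg (sub_nonneg.2 hlam) (Real.exp_pos (-y)).le]
  have hnum : lam * y * Real.exp (-y) ≤ y := by
    nlinarith [mul_nonneg hy.le (sub_nonneg.2 hfactor)]
  exact div_le_div_of_nonneg_right hnum (by linarith)

lemma inv_add_one_le_inv_zeta {lam y : ℝ} (hlam : 0 < lam) (hlam1 : lam ≤ 1) (hy : 0 < y) :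
    y⁻¹ + 1 ≤ (zeta lam y)⁻¹ :=
  calc y⁻¹ + 1 = (y / (y + 1))⁻¹ := by field_simp; ring
    _ ≤ (zeta lam y)⁻¹ := inv_anti₀ (zeta_pos_of_pos hlam hy) (zeta_le_div_add_one hlam1 hy)

theorem zeta_pos_on_Iio_neg_one_and_iterates_tendsto_zero (lam : ℝ) (hlam : 0 < lam) :
    (∀ x : ℝ, x < -1 → 0 < zeta lam x) ∧
      (lam ≤ 1 → ∀ x : ℝ, x < -1 →
        Tendsto (fun n : ℕ => (zeta lam)^[n] x) atTop (nhds 0)) := by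
  refine ⟨fun x hx => zeta_pos_of_lt_neg_one hlam hx, fun hlam1 x hx => ?_⟩
  have htail := tendsto_iterate_zero_of_inv_add_one_le
    (fun y hy => ⟨zeta_pos_of_pos hlam hy, inv_add_one_le_inv_zeta hlam hlam1 hy⟩)
    (zeta_pos_of_lt_neg_one hlam hx)
  rw [← tendsto_add_atTop_iff_nat 1]
  simpa only [Function.iterate_succ_apply] using htail
end

section
/- Let λ = λ* = (√2+1)·e^{√2}. Then for every x ∈ (−∞, −1) ∪ (0, ∞), the iterates satisfy ζ_{λ*}^n(x) → √2 as n → ∞. -/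
/-!
Write `f = ζ_{λ*}`. Its fixed point `√2` is neutral, `f'(√2) = -1`, so we compare `f` with the
Möbius involution `M` fixing `√2` that osculates `f` there: cubic Taylor bounds for `exp` give
`f ≤ M` on `[0.7, √2]` and `f > M` on `(√2, 2.1]`. Since `f` is decreasing on `[0.7, ∞)` and swaps
`[0.7, √2)` and `(√2, 2.1]`, this yields `x < f (f x) < √2` on `[0.7, √2)`; hence the even iterates
increase to a fixed point of `f ∘ f`, which can only be `√2`. Any orbit starting in
`(-∞, -1) ∪ (0, ∞)` lies in `(0, 2.1]` after two steps, and `f x ≥ 2 x` on `(0, 0.7]` then pushes it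
into `[0.7, 2.1]`.
-/

open Filter

open Function Real Set Topology

section Iteration

variable {α : Type*}

theorem tendsto_of_tendsto_even_of_tendsto_odd {u : ℕ → α} {l : Filter α}
    (heven : Tendsto (fun n => u (2 * n)) atTop l)
    (hodd : Tendsto (fun n => u (2 * n + 1)) atTop l) : Tendsto u atTop l := by
  rw [tendsto_atTop'] at *
  intro s hs
  obtain ⟨N₀, hN₀⟩ := heven s hs
  obtain ⟨N₁, hN₁⟩ := hodd s hs
  refine ⟨2 * N₀ + 2 * N₁, fun n hn => ?_⟩
  obtain ⟨k, rfl | rfl⟩ := Nat.even_or_odd' n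
  · exact hN₀ k (by omega)
  · exact hN₁ k (by omega)

theorem tendsto_iterate_of_tendsto_iterate_iterate {f : α → α} {x : α} {l : Filter α} (k : ℕ)
    (h : Tendsto (fun n => f^[n] (f^[k] x)) atTop l) : Tendsto (fun n => f^[n] x) atTop l :=
  (tendsto_add_atTop_iff_nat k).1 (by simpa only [iterate_add_apply] using h)

theorem tendsto_iterate_of_tendsto_iterate_comp_self [TopologicalSpace α] {f : α → α} {p x : α}
    (hf : ContinuousAt f p) (hp : f p = p) (h : Tendsto (fun n => (f ∘ f)^[n] x) atTop (𝓝 p)) :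
    Tendsto (fun n => f^[n] x) atTop (𝓝 p) := by
  have heven : ∀ n, f^[2 * n] x = (f ∘ f)^[n] x := fun n => by
    rw [iterate_mul]
    rfl
  refine tendsto_of_tendsto_even_of_tendsto_odd (by simpa only [heven] using h) ?_
  simp only [iterate_succ_apply', heven]
  exact hp ▸ hf.tendsto.comp h

theorem tendsto_iterate_of_lt_apply [ConditionallyCompleteLinearOrder α] [TopologicalSpace α]
    [OrderTopology α] {g : α → α} {a p x : α} (hmaps : MapsTo g (Ico a p) (Ico a p))
    (hlt : ∀ y ∈ Ico a p, y < g y) (hcont : ∀ y ∈ Ico a p, ContinuousAt g y) (hx : x ∈ Ico a p) :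
    Tendsto (fun n => g^[n] x) atTop (𝓝 p) := by
  have hmem : ∀ n, g^[n] x ∈ Ico a p := fun n => hmaps.iterate n hx
  have hmono : Monotone fun n => g^[n] x := monotone_nat_of_le_succ fun n => by
    rw [iterate_succ_apply']
    exact (hlt _ (hmem n)).le
  have hbdd : BddAbove (range fun n => g^[n] x) :=
    ⟨p, forall_mem_range.2 fun n => (hmem n).2.le⟩
  have hlim := tendsto_atTop_ciSup hmono hbdd
  set L := ⨆ n, g^[n] x
  have hL : L ∈ Icc a p := ⟨(hmem 0).1.trans (le_ciSup hbdd 0), ciSup_le fun n => (hmem n).2.le⟩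
  obtain hLp | rfl := hL.2.lt_or_eq
  · have hfix : g L = L := isFixedPt_of_tendsto_iterate hlim (hcont L ⟨hL.1, hLp⟩)
    exact absurd hfix (hlt L ⟨hL.1, hLp⟩).ne'
  · exact hlim

theorem exists_iterate_gt_of_le_mul {g : ℝ → ℝ} {a c x : ℝ} (hc : 1 < c)
    (hg : ∀ y ∈ Ioc 0 a, c * y ≤ g y) (hx : 0 < x) :
    ∃ n, (∀ k < n, g^[k] x ∈ Ioc 0 a) ∧ a < g^[n] x := by
  have hgrowth : ∀ n, (∀ k < n, g^[k] x ≤ a) → 0 < g^[n] x ∧ c ^ n * x ≤ g^[n] x := by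
    intro n
    induction n with
    | zero => intro _; simpa using hx
    | succ n ih =>
      intro hle
      obtain ⟨hpos, hge⟩ := ih fun k hk => hle k (by omega)
      have hstep := hg _ ⟨hpos, hle n n.lt_succ_self⟩
      rw [iterate_succ_apply', pow_succ]
      constructor <;> nlinarith
  have hexit : ∃ n, a < g^[n] x := by
    by_contra! hle
    obtain ⟨n, hn⟩ := pow_unbounded_of_one_lt (a / x) hc
    rw [div_lt_iff₀ hx] at hn
    linarith [(hgrowth n fun k _ => hle k).2, hle n]
  classical
  refine ⟨Nat.find hexit, fun k hk => ?_, Nat.find_spec hexit⟩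
  have hle : ∀ j < k, g^[j] x ≤ a := fun j hj => not_lt.1 (Nat.find_min hexit (hj.trans hk))
  exact ⟨(hgrowth k hle).1, not_lt.1 (Nat.find_min hexit hk)⟩

end Iteration

theorem taylor_cubic_le_exp_neg {s : ℝ} (hs : 0 ≤ s) :
    1 - s + s ^ 2 / 2 - s ^ 3 / 6 ≤ exp (-s) := by
  set φ : ℝ → ℝ := fun u => exp u * (1 - u + u ^ 2 / 2 - u ^ 3 / 6)
  have hφ' : ∀ u, HasDerivAt φ (-(exp u * u ^ 3 / 6)) u := fun u => by
    refine ((hasDerivAt_exp u).mul ((((hasDerivAt_id u).const_sub 1).add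
      ((hasDerivAt_pow 2 u).div_const 2)).sub ((hasDerivAt_pow 3 u).div_const 6))).congr_deriv ?_
    simp only [id, Nat.cast_ofNat, Pi.add_apply, Pi.sub_apply]
    ring
  have hanti : AntitoneOn φ (Ici 0) := by
    refine antitoneOn_of_deriv_nonpos (convex_Ici 0) (by fun_prop) (by fun_prop) fun u hu => ?_
    rw [interior_Ici] at hu
    rw [(hφ' u).deriv, neg_nonpos]
    have : (0 : ℝ) < u := hu
    positivity
  have hφs : φ s ≤ 1 := by simpa [φ] using hanti self_mem_Ici hs hs
  calc 1 - s + s ^ 2 / 2 - s ^ 3 / 6 = exp (-s) * φ s := by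
        simp only [φ, ← mul_assoc, ← exp_add, neg_add_cancel, exp_zero, one_mul]
    _ ≤ exp (-s) * 1 := mul_le_mul_of_nonneg_left hφs (exp_pos _).le
    _ = exp (-s) := mul_one _

theorem zeta_pos {lam x : ℝ} (hlam : 0 < lam) (hx : x < -1 ∨ 0 < x) : 0 < zeta lam x := by
  unfold zeta
  rcases hx with hx | hx
  · exact div_pos_of_neg_of_neg
      (mul_neg_of_neg_of_pos (mul_neg_of_pos_of_neg hlam (by linarith)) (exp_pos _)) (by linarith)
  · exact div_pos (by positivity) (by linarith)

theorem zeta_continuousAt (lam : ℝ) {x : ℝ} (hx : x ≠ -1) : ContinuousAt (zeta lam) x :=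
  ContinuousAt.div (by fun_prop) (by fun_prop) fun h => hx (by linarith)

theorem zeta_strictAntiOn {lam : ℝ} (hlam : 0 < lam) : StrictAntiOn (zeta lam) (Ici 0.7) := by
  intro a (ha : 0.7 ≤ a) b (hb : 0.7 ≤ b) hab
  have key : b * (a + 1) < a * (b + 1) * exp (b - a) := calc
    b * (a + 1) < a * (b + 1) * (b - a + 1) := by
      nlinarith [mul_pos (sub_pos.2 hab) (show 0 < a * (b + 1) - 1 by nlinarith)]
    _ ≤ a * (b + 1) * exp (b - a) := mul_le_mul_of_nonneg_left (add_one_le_exp _) (by positivity)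
  have hexp : exp (-a) = exp (-b) * exp (b - a) := by rw [← exp_add]; ring_nf
  unfold zeta
  rw [div_lt_div_iff₀ (by linarith) (by linarith), hexp]
  have := mul_lt_mul_of_pos_left key (mul_pos hlam (exp_pos (-b)))
  linarith

noncomputable def lamStar : ℝ := (√2 + 1) * exp √2

theorem lamStar_pos : 0 < lamStar := by unfold lamStar; positivity

theorem zeta_lamStar_apply (x : ℝ) : zeta lamStar x = (√2 + 1) * x * exp (√2 - x) / (x + 1) := by
  unfold zeta lamStar
  rw [sub_eq_add_neg, exp_add]
  ring

theorem zeta_lamStar_sqrt_two : zeta lamStar √2 = √2 := by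
  rw [zeta_lamStar_apply, sub_self, exp_zero, mul_one]
  field_simp

theorem sqrt_two_mem_Ioo : √2 ∈ Ioo 1.414213 1.414214 :=
  ⟨(lt_sqrt (by norm_num)).2 (by norm_num), (sqrt_lt' (by norm_num)).2 (by norm_num)⟩

theorem lamStar_le : lamStar ≤ 9.949 := by
  obtain ⟨hl, hu⟩ := sqrt_two_mem_Ioo
  have h2 : √2 ^ 2 = 2 := sq_sqrt (by norm_num)
  set T := 1 - (√2 - 1) + (√2 - 1) ^ 2 / 2 - (√2 - 1) ^ 3 / 6
  have hT_eq : T = 14 / 3 - 17 / 6 * √2 := by linear_combination (1 - √2 / 6) * h2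
  have hT : 0 < T := by linarith
  have hexp : exp √2 * T ≤ exp 1 := calc
    exp √2 * T ≤ exp √2 * exp (-(√2 - 1)) :=
      mul_le_mul_of_nonneg_left (taylor_cubic_le_exp_neg (by linarith)) (exp_pos _).le
    _ = exp 1 := by rw [← exp_add]; ring_nf
  refine le_of_mul_le_mul_right ?_ hT
  calc lamStar * T = (√2 + 1) * (exp √2 * T) := by unfold lamStar; ring
    _ ≤ (√2 + 1) * 2.7182818286 :=
      mul_le_mul_of_nonneg_left (hexp.trans exp_one_lt_d9.le) (by positivity)
    _ ≤ 9.949 * T := by rw [hT_eq]; linarith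

theorem zeta_lamStar_le_of_mem_Ioc {x : ℝ} (hx : x ∈ Ioc 0 0.7) : zeta lamStar x ≤ 2.1 := by
  obtain ⟨hx0, hx1⟩ := hx
  have hcubic : 1 + x + x ^ 2 / 2 + x ^ 3 / 6 ≤ exp x := by
    have := sum_le_exp_of_nonneg hx0.le 4
    simp only [Finset.sum_range_succ, Finset.sum_range_zero, Nat.factorial] at this
    norm_num at this
    linarith
  have hpoly : 9.949 * x ≤ 2.1 * (x + 1) * (1 + x + x ^ 2 / 2 + x ^ 3 / 6) := by
    nlinarith [sq_nonneg (x - 0.63)]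
  unfold zeta
  rw [div_le_iff₀ (by linarith)]
  calc lamStar * x * exp (-x) ≤ 9.949 * x * exp (-x) := by gcongr; exact lamStar_le
    _ ≤ 2.1 * (x + 1) * exp x * exp (-x) := mul_le_mul_of_nonneg_right
      (hpoly.trans (mul_le_mul_of_nonneg_left hcubic (by positivity))) (exp_pos _).le
    _ = 2.1 * (x + 1) := by rw [mul_assoc _ (exp x), ← exp_add, add_neg_cancel, exp_zero, mul_one]

theorem two_mul_le_zeta_lamStar {x : ℝ} (hx : x ∈ Ioc 0 0.7) : 2 * x ≤ zeta lamStar x := by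
  obtain ⟨hx0, hx1⟩ := hx
  obtain ⟨hl, -⟩ := sqrt_two_mem_Ioo
  rw [zeta_lamStar_apply, le_div_iff₀ (by linarith)]
  have hexp := mul_le_mul_of_nonneg_left (add_one_le_exp (√2 - x))
    (by positivity : 0 ≤ (√2 + 1) * x)
  have hfactor : 0 ≤ (√2 + 1) * (√2 - x + 1) - 2 * (x + 1) := by nlinarith
  nlinarith [mul_nonneg hx0.le hfactor]

theorem le_zeta_lamStar_two_point_one : 0.7 ≤ zeta lamStar 2.1 := by
  obtain ⟨hl, hu⟩ := sqrt_two_mem_Ioo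
  have hT := taylor_cubic_le_exp_neg (s := 2.1 - √2) (by linarith)
  rw [neg_sub] at hT
  rw [zeta_lamStar_apply, le_div_iff₀ (by norm_num)]
  nlinarith [sq_sqrt (show (0 : ℝ) ≤ 2 by norm_num)]

theorem zeta_lamStar_mem_Ioc {x : ℝ} (hx : 0 < x) : zeta lamStar x ∈ Ioc 0 2.1 := by
  refine ⟨zeta_pos lamStar_pos (.inr hx), ?_⟩
  rcases le_or_gt x 0.7 with h | h
  · exact zeta_lamStar_le_of_mem_Ioc ⟨hx, h⟩
  · exact (zeta_strictAntiOn lamStar_pos self_mem_Ici (mem_Ici.2 h.le) h).le.trans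
      (zeta_lamStar_le_of_mem_Ioc ⟨by norm_num, le_rfl⟩)

theorem mapsTo_zeta_lamStar_Ico_Ioc : MapsTo (zeta lamStar) (Ico 0.7 √2) (Ioc √2 2.1) :=
  fun x ⟨(hx1 : 0.7 ≤ x), hx2⟩ => ⟨zeta_lamStar_sqrt_two ▸ zeta_strictAntiOn lamStar_pos hx1
    (mem_Ici.2 (hx1.trans hx2.le)) hx2, (zeta_lamStar_mem_Ioc (by linarith)).2⟩

theorem mapsTo_zeta_lamStar_Ioc_Ico : MapsTo (zeta lamStar) (Ioc √2 2.1) (Ico 0.7 √2) := by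
  have h : (0.7 : ℝ) ≤ √2 := by linarith [sqrt_two_mem_Ioo.1]
  refine fun x ⟨hx1, hx2⟩ => ⟨le_zeta_lamStar_two_point_one.trans ?_, ?_⟩
  · exact (zeta_strictAntiOn lamStar_pos).antitoneOn (mem_Ici.2 (h.trans hx1.le))
      (mem_Ici.2 (by norm_num)) hx2
  · exact zeta_lamStar_sqrt_two ▸ zeta_strictAntiOn lamStar_pos (mem_Ici.2 h)
      (mem_Ici.2 (h.trans hx1.le)) hx1

/-- The curve `mobiusForm x y = 0` is the graph of the Möbius involution fixing `√2` that agrees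
with `zeta lamStar` to second order at `√2` (where the derivative of `zeta lamStar` is `-1`). -/
noncomputable def mobiusForm (x y : ℝ) : ℝ :=
  (x - √2) + (y - √2) + (3 * √2 - 4) / 2 * ((x - √2) * (y - √2))

theorem mobiusForm_comm (x y : ℝ) : mobiusForm x y = mobiusForm y x := by
  unfold mobiusForm
  ring

theorem strictMono_mobiusForm_left {y : ℝ} (hy : 0 < 1 + (3 * √2 - 4) / 2 * (y - √2)) :
    StrictMono fun x => mobiusForm x y := by
  intro x z hxz
  have h : mobiusForm z y - mobiusForm x y = (z - x) * (1 + (3 * √2 - 4) / 2 * (y - √2)) := by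
    unfold mobiusForm
    ring
  linarith [mul_pos (sub_pos.2 hxz) hy]

theorem mul_mobiusForm_zeta_lamStar {x : ℝ} (hx : x + 1 ≠ 0) :
    (x + 1) * mobiusForm (zeta lamStar x) x =
      (√2 + 1) * x * exp (√2 - x) * (1 + (3 * √2 - 4) / 2 * (x - √2))
        - (√2 * (1 + (3 * √2 - 4) / 2 * (x - √2)) - (x - √2)) * (x + 1) := by
  rw [zeta_lamStar_apply]
  unfold mobiusForm
  field_simp
  ring

theorem mobiusForm_zeta_lamStar_nonpos {x : ℝ} (hx : x ∈ Icc 0.7 √2) :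
    mobiusForm (zeta lamStar x) x ≤ 0 := by
  obtain ⟨hx1, hx2⟩ := hx
  obtain ⟨hl, hu⟩ := sqrt_two_mem_Ioo
  have h2 : √2 ^ 2 = 2 := sq_sqrt (by norm_num)
  set w := 1 + (3 * √2 - 4) / 2 * (x - √2) with hw
  set T := 1 - (√2 - x) + (√2 - x) ^ 2 / 2 - (√2 - x) ^ 3 / 6 with hT
  have hTexp : T ≤ exp (x - √2) := by
    simpa only [neg_sub] using taylor_cubic_le_exp_neg (sub_nonneg.2 hx2)
  have hpoly : (√2 + 1) * x * w ≤ (√2 * w - (x - √2)) * (x + 1) * T := by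
    have hH : 0 ≤ (-11/3 + 8/3 * √2) + (-2 + 3/2 * √2) * x + ((√2 - 1) / 3) * x ^ 2 := by
      nlinarith
    have hid : (√2 * w - (x - √2)) * (x + 1) * T - (√2 + 1) * x * w
        = (√2 - x) ^ 3 * ((-11/3 + 8/3 * √2) + (-2 + 3/2 * √2) * x + ((√2 - 1) / 3) * x ^ 2) := by
      rw [hw, hT]
      linear_combination ((-1) * √2 + (-13/12) * √2 ^ 3 + (1/4) * √2 ^ 4 + x
        + (19/4) * x * √2 ^ 2 + (-25/12) * x * √2 ^ 3 + (1/4) * x * √2 ^ 4 + (-25/4) * x ^ 2 * √2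
        + (19/4) * x ^ 2 * √2 ^ 2 + (-1) * x ^ 2 * √2 ^ 3 + (31/12) * x ^ 3 + (-17/4) * x ^ 3 * √2
        + (3/2) * x ^ 3 * √2 ^ 2 + (4/3) * x ^ 4 + (-1) * x ^ 4 * √2 + (1/4) * x ^ 5) * h2
    nlinarith [mul_nonneg (pow_nonneg (sub_nonneg.2 hx2) 3) hH]
  have hw0 : 0 < w := by rw [hw]; nlinarith
  have hcoef : 0 ≤ (√2 * w - (x - √2)) * (x + 1) := mul_nonneg (by nlinarith) (by linarith)
  have hkey : (√2 + 1) * x * exp (√2 - x) * w ≤ (√2 * w - (x - √2)) * (x + 1) := calc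
    (√2 + 1) * x * exp (√2 - x) * w = (√2 + 1) * x * w * exp (√2 - x) := by ring
    _ ≤ (√2 * w - (x - √2)) * (x + 1) * exp (x - √2) * exp (√2 - x) :=
      mul_le_mul_of_nonneg_right (hpoly.trans (mul_le_mul_of_nonneg_left hTexp hcoef))
        (exp_pos _).le
    _ = (√2 * w - (x - √2)) * (x + 1) := by
      rw [mul_assoc _ (exp _), ← exp_add, sub_add_sub_cancel, sub_self, exp_zero, mul_one]
  refine nonpos_of_mul_nonpos_right (a := x + 1) ?_ (by linarith)
  rw [mul_mobiusForm_zeta_lamStar (by linarith), ← hw]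
  linarith

theorem mobiusForm_zeta_lamStar_pos {x : ℝ} (hx : x ∈ Ioc √2 2.1) :
    0 < mobiusForm (zeta lamStar x) x := by
  obtain ⟨hx1, hx2⟩ := hx
  obtain ⟨hl, hu⟩ := sqrt_two_mem_Ioo
  have h2 : √2 ^ 2 = 2 := sq_sqrt (by norm_num)
  set w := 1 + (3 * √2 - 4) / 2 * (x - √2) with hw
  set T := 1 - (x - √2) + (x - √2) ^ 2 / 2 - (x - √2) ^ 3 / 6 with hT
  have hTexp : T ≤ exp (√2 - x) := by
    simpa only [neg_sub] using taylor_cubic_le_exp_neg (sub_nonneg.2 hx1.le)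
  have hpoly : (√2 * w - (x - √2)) * (x + 1) < (√2 + 1) * x * w * T := by
    have hH : 0 < (√2 - 1/2) + (1/6 - √2/4) * x + (√2/12 - 1/6) * x ^ 2 := by nlinarith
    have hid : (√2 + 1) * x * w * T - (√2 * w - (x - √2)) * (x + 1)
        = (x - √2) ^ 3 * ((√2 - 1/2) + (1/6 - √2/4) * x + (√2/12 - 1/6) * x ^ 2) := by
      rw [hw, hT]
      linear_combination (√2 + √2 ^ 2 + (-1) * x + (-2) * x * √2 + (-3/2) * x * √2 ^ 2
        + (-2/3) * x * √2 ^ 3 + (-1/4) * x * √2 ^ 4 + x ^ 2 + 3 * x ^ 2 * √2 + 2 * x ^ 2 * √2 ^ 2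
        + x ^ 2 * √2 ^ 3 + (-3/2) * x ^ 3 + (-2) * x ^ 3 * √2 + (-3/2) * x ^ 3 * √2 ^ 2
        + (2/3) * x ^ 4 + x ^ 4 * √2 + (-1/4) * x ^ 5) * h2
    nlinarith [mul_pos (pow_pos (sub_pos.2 hx1) 3) hH]
  have hx0 : 0 < x := by linarith
  have hw0 : 0 < w := by rw [hw]; nlinarith
  refine pos_of_mul_pos_right (a := x + 1) ?_ (by linarith)
  rw [mul_mobiusForm_zeta_lamStar (by linarith), ← hw]
  have hcoef : 0 ≤ (√2 + 1) * x * w := by positivity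
  nlinarith [mul_le_mul_of_nonneg_left hTexp hcoef]

theorem lt_zeta_lamStar_zeta_lamStar {x : ℝ} (hx : x ∈ Ico 0.7 √2) :
    x < zeta lamStar (zeta lamStar x) := by
  have hy := mapsTo_zeta_lamStar_Ico_Ioc hx
  have hw : 0 < 1 + (3 * √2 - 4) / 2 * (zeta lamStar x - √2) := by
    nlinarith [sqrt_two_mem_Ioo.1, hy.1]
  have hx' : mobiusForm x (zeta lamStar x) ≤ 0 :=
    mobiusForm_comm x _ ▸ mobiusForm_zeta_lamStar_nonpos (Ico_subset_Icc_self hx)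
  exact (strictMono_mobiusForm_left hw).lt_iff_lt.1 (hx'.trans_lt (mobiusForm_zeta_lamStar_pos hy))

theorem tendsto_iterate_zeta_lamStar_of_mem_Ico {x : ℝ} (hx : x ∈ Ico 0.7 √2) :
    Tendsto (fun n => (zeta lamStar)^[n] x) atTop (𝓝 √2) := by
  have hcont : ∀ y ∈ Ico (0.7 : ℝ) √2, ContinuousAt (zeta lamStar ∘ zeta lamStar) y :=
    fun y hy => (zeta_continuousAt _ (by linarith [(mapsTo_zeta_lamStar_Ico_Ioc hy).1,
      sqrt_two_mem_Ioo.1])).comp (zeta_continuousAt _ (by linarith [hy.1]))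
  refine tendsto_iterate_of_tendsto_iterate_comp_self
    (zeta_continuousAt _ (by linarith [sqrt_two_mem_Ioo.1])) zeta_lamStar_sqrt_two ?_
  exact tendsto_iterate_of_lt_apply (mapsTo_zeta_lamStar_Ioc_Ico.comp mapsTo_zeta_lamStar_Ico_Ioc)
    (fun y hy => lt_zeta_lamStar_zeta_lamStar hy) hcont hx

theorem tendsto_iterate_zeta_lamStar_of_mem_Icc {x : ℝ} (hx : x ∈ Icc 0.7 2.1) :
    Tendsto (fun n => (zeta lamStar)^[n] x) atTop (𝓝 √2) := by
  rcases lt_trichotomy x √2 with h | h | h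
  · exact tendsto_iterate_zeta_lamStar_of_mem_Ico ⟨hx.1, h⟩
  · simp only [h, iterate_fixed zeta_lamStar_sqrt_two, tendsto_const_nhds]
  · exact tendsto_iterate_of_tendsto_iterate_iterate 1
      (tendsto_iterate_zeta_lamStar_of_mem_Ico (mapsTo_zeta_lamStar_Ioc_Ico ⟨h, hx.2⟩))

theorem exists_iterate_zeta_lamStar_mem_Icc {x : ℝ} (hx : x ∈ Ioc 0 2.1) :
    ∃ n, (zeta lamStar)^[n] x ∈ Icc 0.7 2.1 := by
  obtain ⟨n, hlow, hexit⟩ :=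
    exists_iterate_gt_of_le_mul one_lt_two (fun y hy => two_mul_le_zeta_lamStar hy) hx.1
  refine ⟨n, hexit.le, ?_⟩
  cases n with
  | zero => exact hx.2
  | succ k =>
    rw [iterate_succ_apply']
    exact zeta_lamStar_le_of_mem_Ioc (hlow k k.lt_succ_self)

theorem iterates_tendsto_sqrt_two_at_lamStar :
    ∀ x : ℝ, x < -1 ∨ 0 < x →
      Tendsto (fun n : ℕ => (zeta ((Real.sqrt 2 + 1) * Real.exp (Real.sqrt 2)))^[n] x)
        atTop (nhds (Real.sqrt 2)) := by
  intro x hx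
  obtain ⟨n, hn⟩ :=
    exists_iterate_zeta_lamStar_mem_Icc (zeta_lamStar_mem_Ioc (zeta_pos lamStar_pos hx))
  exact tendsto_iterate_of_tendsto_iterate_iterate (n + 2)
    (by rw [iterate_add_apply]; exact tendsto_iterate_zeta_lamStar_of_mem_Icc hn)
end
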